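/- Let p be an odd prime and α_p = exp(2πi/p). The p+1 orthonormal bases of ℂ^p consisting of the standard basis together with the p Fourier–Gauss bases B_m = { |j_m⟩ = p^{−1/2} Σ_{s=0}^{p−1} α_p^{js+ms²}|s⟩ : j = 0,…,p−1 } (m = 0,…,p−1) are pairwise mutually unbiased: |⟨j_m, k_n⟩|² = 1/p whenever m ≠ n, and similarly each B_m is mutually unbiased with the standard basis. -/

import Mathlib

/-- `α_p = exp(2πi/p)`, the `p`-th root of unity. -/
noncomputable def rootOfUnity (p : ℕ) : ℂ := Complex.exp (2 * Real.pi * Complex.I / p)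

/-- The Fourier–Gauss vector `|j_m⟩` with components `p^{-1/2}·α_p^{js + ms²}`. -/
noncomputable def fourierGauss (p : ℕ) (j m : ℕ) : EuclideanSpace ℂ (Fin p) :=
  WithLp.toLp 2 (fun s : Fin p => (Real.sqrt p : ℂ)⁻¹ * rootOfUnity p ^ (j * (s : ℕ) + m * (s : ℕ) ^ 2))

/-!
With `ψ` the standard additive character of `ZMod p`, the inner product `⟨j_m, k_n⟩` equals
`p⁻¹ ∑ₓ ψ(a x + b x²)` with `a = k - j`, `b = n - m`. Expanding `|∑ₓ ψ(q x)|²` and substituting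
`x ↦ x + y` gives `∑ₓ ψ(q x) ∑_y ψ(2 b x y)`; the inner sum vanishes unless `2 b x = 0`, which for
`b ≠ 0` and `p` odd forces `x = 0`. Hence the quadratic Gauss sum has absolute value `√p`.
-/

open Finset ComplexConjugate

namespace AddChar

variable {R K : Type*} [CommRing R] [Fintype R] [RCLike K]

theorem norm_sq_sum_quadratic {ψ : AddChar R K} (hψ : ψ.IsPrimitive) (a : R) {b : R}
    (hb : IsUnit (2 * b)) : ‖∑ x, ψ (a * x + b * x ^ 2)‖ ^ 2 = Fintype.card R := by
  classical
  set q : R → R := fun x => a * x + b * x ^ 2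
  have shift (x y : R) : q (x + y) - q y = q x + y * (2 * b * x) := by simp only [q]; ring
  have key : ((‖∑ x, ψ (q x)‖ : K) ^ 2) = Fintype.card R :=
    calc ((‖∑ x, ψ (q x)‖ : K) ^ 2)
        = ∑ y, ∑ x, ψ (q (x + y) - q y) := by
          rw [← RCLike.mul_conj, map_sum, sum_mul_sum, sum_comm]
          refine sum_congr rfl fun y _ => ?_
          rw [← Equiv.sum_comp (Equiv.addRight y)]
          simp only [Equiv.coe_addRight, sub_eq_add_neg, map_add_eq_mul, map_neg_eq_conj]
      _ = ∑ x, ψ (q x) * ∑ y, ψ (y * (2 * b * x)) := by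
          simp_rw [shift, map_add_eq_mul, mul_sum]
          exact sum_comm
      _ = Fintype.card R := by
          simp_rw [sum_mulShift _ hψ, hb.mul_right_eq_zero]
          simp [q]
  exact_mod_cast key

end AddChar

theorem ZMod.natCast_fin_bijective (n : ℕ) [NeZero n] :
    Function.Bijective fun s : Fin n => ((s : ℕ) : ZMod n) := by
  refine (Fintype.bijective_iff_surjective_and_card _).mpr ⟨fun x => ?_, by simp⟩
  exact ⟨⟨x.val, x.val_lt⟩, ZMod.natCast_zmod_val x⟩

section FourierGauss

open ZMod

variable {p : ℕ} [NeZero p]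

theorem rootOfUnity_pow (n : ℕ) : rootOfUnity p ^ n = stdAddChar (n : ZMod p) := by
  rw [← Int.cast_natCast, stdAddChar_coe, rootOfUnity, ← Complex.exp_nat_mul]
  push_cast
  ring_nf

theorem fourierGauss_apply (j m : ℕ) (s : Fin p) :
    fourierGauss p j m s = (√p : ℂ)⁻¹ * stdAddChar ((j * s + m * s ^ 2 : ℕ) : ZMod p) := by
  rw [fourierGauss, PiLp.toLp_apply, rootOfUnity_pow]

theorem inner_fourierGauss (j m k n : ℕ) :
    inner ℂ (fourierGauss p j m) (fourierGauss p k n) =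
      (p : ℂ)⁻¹ * ∑ x : ZMod p, stdAddChar ((k - j : ZMod p) * x + (n - m : ZMod p) * x ^ 2) := by
  have hsqrt : (√p : ℂ)⁻¹ * (√p : ℂ)⁻¹ = (p : ℂ)⁻¹ := by
    rw [← mul_inv, ← Complex.ofReal_mul, Real.mul_self_sqrt (Nat.cast_nonneg p),
      Complex.ofReal_natCast]
  rw [PiLp.inner_apply, mul_sum]
  refine Fintype.sum_bijective _ (natCast_fin_bijective p) _ _ fun s => ?_
  rw [RCLike.inner_apply', fourierGauss_apply, fourierGauss_apply, map_mul, map_inv₀,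
    Complex.conj_ofReal, ← AddChar.map_neg_eq_conj, mul_mul_mul_comm, hsqrt,
    ← AddChar.map_add_eq_mul]
  congr 2
  push_cast
  ring

theorem norm_sq_inner_single_fourierGauss (s : Fin p) (j m : ℕ) :
    ‖inner ℂ (EuclideanSpace.single s (1 : ℂ)) (fourierGauss p j m)‖ ^ 2 = 1 / p := by
  rw [EuclideanSpace.inner_single_left, map_one, one_mul, fourierGauss_apply, norm_mul,
    AddChar.norm_apply, mul_one, norm_inv, Complex.norm_real,
    Real.norm_of_nonneg (Real.sqrt_nonneg p), inv_pow, Real.sq_sqrt (Nat.cast_nonneg p), one_div]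

end FourierGauss

theorem norm_sq_inner_fourierGauss {p : ℕ} [Fact p.Prime] (hp2 : p ≠ 2) (j k : ℕ) {m n : Fin p}
    (hmn : m ≠ n) :
    ‖inner ℂ (fourierGauss p j m) (fourierGauss p k n)‖ ^ 2 = 1 / p := by
  have h2 : (2 : ZMod p) ≠ 0 := Ring.two_ne_zero (by rwa [ZMod.ringChar_zmod_n])
  have hmn' : ((n : ℕ) : ZMod p) - m ≠ 0 :=
    sub_ne_zero.mpr fun h => hmn ((ZMod.natCast_fin_bijective p).1 h).symm
  rw [inner_fourierGauss, norm_mul, mul_pow, AddChar.norm_sq_sum_quadratic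
    (ZMod.isPrimitive_stdAddChar p) _ (isUnit_iff_ne_zero.mpr (mul_ne_zero h2 hmn')),
    ZMod.card, norm_inv, Complex.norm_natCast]
  field_simp

theorem fourierGauss_mutually_unbiased (p : ℕ) (hp : p.Prime) (hodd : Odd p) :
    (∀ m n j k : Fin p, m ≠ n →
      ‖(inner ℂ (fourierGauss p (j : ℕ) (m : ℕ))
          (fourierGauss p (k : ℕ) (n : ℕ)) : ℂ)‖ ^ 2 = 1 / (p : ℝ)) ∧
    (∀ (s : Fin p) (m j : Fin p),
      ‖(inner ℂ (EuclideanSpace.single s (1 : ℂ))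
          (fourierGauss p (j : ℕ) (m : ℕ)) : ℂ)‖ ^ 2 = 1 / (p : ℝ)) := by
  have : Fact p.Prime := ⟨hp⟩
  have hp2 : p ≠ 2 := by rintro rfl; exact Nat.not_odd_iff_even.mpr even_two hodd
  exact ⟨fun m n j k hmn => norm_sq_inner_fourierGauss hp2 j k hmn,
    fun s m j => norm_sq_inner_single_fourierGauss s j m⟩
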